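/- There exists a constant c > 0 such that for all integers n ≥ 2, k ≤ n and r with 1 ≤ r ≤ c·k²/(n·log n), with probability at least 0.99 over H drawn from B(k, n−k, 1/2), every biclique (L, R) of H with |L| + |R| = k satisfies |L|^{4r} · |R| ≤ (1000r)^{10r} · n · (n/k)⁴. -/

import Mathlib

/-!
Union bound. A fixed pair `(L, R)` with `|L| = a`, `|R| = b` is a biclique of `B(k, n - k, 1/2)`
with probability `2^{-ab}`, and there are `C(k, a) C(n - k, b) ≤ (e n / b)^{2b}` such pairs. If
`a + b = k` and `a^{4r} b > (1000r)^{10r} n (n/k)^4`, then `a ≥ 10^5 (1 + log (n/b))`, which makes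
`2^{ab}` exceed this count by a factor `100 (k + 1)`; summing over the `k + 1` possible shapes
`(a, k - a)` bounds the probability of a violating biclique by `1/100`.
-/

open MeasureTheory

/-- The random bipartite graph model `B(k, m, p)`: left vertex set `Fin k`, right vertex
set `Fin m`, each of the `k·m` edges present independently with probability `p`
(`true` means present). -/
noncomputable def bipartiteER (k m : ℕ) (p : ENNReal) (hp : p ≤ 1) :
    Measure (Fin k × Fin m → Bool) :=
  Measure.pi fun _ : Fin k × Fin m => (PMF.bernoulli p.toNNReal
    (by simpa using ENNReal.toNNReal_mono ENNReal.one_ne_top hp)).toMeasure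

/-- `(L, R)` is a biclique of the bipartite graph `H`. -/
def IsBiclique {k m : ℕ} (H : Fin k × Fin m → Bool) (L : Finset (Fin k))
    (R : Finset (Fin m)) : Prop :=
  ∀ u ∈ L, ∀ v ∈ R, H (u, v) = true

open Real

theorem Nat.choose_le_exp_one_mul_div_pow (m b : ℕ) :
    (m.choose b : ℝ) ≤ (exp 1 * m / b) ^ b := by
  rcases b.eq_zero_or_pos with rfl | hb
  · simp
  have hbpos : (0 : ℝ) < b := by exact_mod_cast hb
  have hexp : (b : ℝ) ^ b / b.factorial ≤ exp 1 ^ b := by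
    simpa [← exp_nat_mul] using pow_div_factorial_le_exp (b : ℝ) hbpos.le b
  calc (m.choose b : ℝ) ≤ (m : ℝ) ^ b / b.factorial := Nat.choose_le_pow_div b m
    _ = (b : ℝ) ^ b / b.factorial * ((m : ℝ) / b) ^ b := by
        rw [div_pow]; field_simp
    _ ≤ exp 1 ^ b * ((m : ℝ) / b) ^ b := by gcongr
    _ = (exp 1 * m / b) ^ b := by rw [mul_div_assoc, mul_pow]

theorem Real.one_add_log_pow_le {s : ℝ} (hs : 1 ≤ s) {m : ℕ} (hm : 1 ≤ m) :
    (1 + log s) ^ m ≤ (m : ℝ) ^ m * s := by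
  have hmR : (1 : ℝ) ≤ m := by exact_mod_cast hm
  have hlog : 0 ≤ log s := log_nonneg hs
  calc (1 + log s) ^ m ≤ (m * exp (log s / m)) ^ m := by
        gcongr
        calc 1 + log s ≤ m * (1 + log s / m) := by
              rw [mul_add, mul_div_cancel₀ _ (by positivity)]; linarith
          _ ≤ m * exp (log s / m) := by
              gcongr; linarith [add_one_le_exp (log s / m)]
    _ = (m : ℝ) ^ m * s := by
        rw [mul_pow, ← exp_nat_mul, mul_div_cancel₀ _ (by positivity), exp_log (by positivity)]

theorem ten_pow_five_mul_one_add_log_le {r : ℕ} (hr : 1 ≤ r) {s a : ℝ} (hs : 1 ≤ s) (ha : 0 ≤ a)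
    (h : (1000 * r : ℝ) ^ (10 * r) * s < a ^ (4 * r)) :
    10 ^ 5 * (1 + log s) ≤ a := by
  by_contra! hlt
  have hrR : (1 : ℝ) ≤ r := by exact_mod_cast hr
  have hconst : (4 * 10 ^ 5 * r : ℝ) ^ 4 ≤ (1000 * r) ^ 10 := by
    have : (r : ℝ) ^ 4 ≤ r ^ 10 := pow_le_pow_right₀ hrR (by norm_num)
    nlinarith [pow_pos (by positivity : (0:ℝ) < r) 4]
  have := calc a ^ (4 * r) ≤ (10 ^ 5 * (1 + log s)) ^ (4 * r) := by gcongr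
    _ = (10 ^ 5 : ℝ) ^ (4 * r) * (1 + log s) ^ (4 * r) := mul_pow _ _ _
    _ ≤ (10 ^ 5 : ℝ) ^ (4 * r) * (((4 * r : ℕ) : ℝ) ^ (4 * r) * s) := by
        gcongr; exact one_add_log_pow_le hs (by omega)
    _ = ((4 * 10 ^ 5 * r : ℝ) ^ 4) ^ r * s := by
        rw [← mul_assoc, ← mul_pow, ← pow_mul, Nat.cast_mul, Nat.cast_ofNat, ← mul_assoc,
          mul_comm (10 ^ 5 : ℝ) 4]
    _ ≤ ((1000 * r : ℝ) ^ 10) ^ r * s := by gcongr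
    _ = (1000 * r : ℝ) ^ (10 * r) * s := by rw [← pow_mul]
  linarith

theorem two_hundred_mul_exp_one_mul_pow_le_two_pow {a b : ℕ} (hb : 1 ≤ b) {s : ℝ} (hs : 1 ≤ s)
    (ha : 10 ^ 5 * (1 + log s) ≤ a) :
    200 * b * s * (exp 1 * s) ^ (2 * b) ≤ 2 ^ (a * b) := by
  have hbR : (1 : ℝ) ≤ b := by exact_mod_cast hb
  have hlogs : 0 ≤ log s := log_nonneg hs
  rw [← log_le_log_iff (by positivity) (by positivity), log_mul (by positivity) (by positivity),
    log_mul (by positivity) (by positivity), log_mul (by positivity) (by positivity),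
    log_pow, log_pow, log_mul (by positivity) (by positivity), log_exp]
  have hlog200 : log 200 ≤ 199 := by linarith [log_le_sub_one_of_pos (by norm_num : (0:ℝ) < 200)]
  have hlogb : log b ≤ b := by linarith [log_le_sub_one_of_pos (by positivity : (0:ℝ) < b)]
  have hlog2 : 0.69 ≤ log 2 := by linarith [log_two_gt_d9]
  have hab : 10 ^ 5 * (1 + log s) * b * 0.69 ≤ (a : ℝ) * b * log 2 := by gcongr
  push_cast
  nlinarith

theorem choose_mul_choose_mul_le_two_pow {n k r a b : ℕ} (hk : k ≤ n) (hr : 1 ≤ r)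
    (hab : a + b = k)
    (hbig : (1000 * r : ℝ) ^ (10 * r) * n * ((n : ℝ) / k) ^ 4 < (a : ℝ) ^ (4 * r) * b) :
    k.choose a * (n - k).choose b * (100 * (k + 1)) ≤ 2 ^ (a * b) := by
  have hconst : 0 ≤ (1000 * r : ℝ) ^ (10 * r) * n * ((n : ℝ) / k) ^ 4 := by positivity
  have ha : 1 ≤ a := by
    by_contra! h
    obtain rfl : a = 0 := by omega
    simp only [CharP.cast_eq_zero, zero_pow (by omega : 4 * r ≠ 0), zero_mul] at hbig
    linarith
  have hb : 1 ≤ b := by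
    by_contra! h
    obtain rfl : b = 0 := by omega
    simp only [CharP.cast_eq_zero, mul_zero] at hbig
    linarith
  have hbR : (0 : ℝ) < b := by exact_mod_cast hb
  have hbn : (b : ℝ) ≤ n := by exact_mod_cast (show b ≤ n by omega)
  set s : ℝ := n / b with hs_def
  have hs : 1 ≤ s := (one_le_div hbR).mpr hbn
  have hpow : (1000 * r : ℝ) ^ (10 * r) * s < (a : ℝ) ^ (4 * r) := by
    have hnk : (1 : ℝ) ≤ ((n : ℝ) / k) ^ 4 :=
      one_le_pow₀ ((one_le_div (by exact_mod_cast (show 0 < k by omega))).mpr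
        (by exact_mod_cast hk))
    rw [hs_def, ← mul_div_assoc, div_lt_iff₀ hbR]
    exact (le_mul_of_one_le_right (by positivity) hnk).trans_lt hbig
  have hthreshold := ten_pow_five_mul_one_add_log_le hr hs (Nat.cast_nonneg a) hpow
  have hchoose {m : ℕ} (hm : m ≤ n) : (m.choose b : ℝ) ≤ (exp 1 * s) ^ b := by
    calc (m.choose b : ℝ) ≤ (exp 1 * m / b) ^ b := Nat.choose_le_exp_one_mul_div_pow m b
      _ ≤ (exp 1 * n / b) ^ b := by gcongr
      _ = (exp 1 * s) ^ b := by rw [mul_div_assoc]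
  have hk1 : (100 * (k + 1) : ℝ) ≤ 200 * b * s := by
    rw [hs_def, mul_assoc, mul_div_cancel₀ _ hbR.ne']
    have : (1 : ℝ) ≤ k := by exact_mod_cast (show 1 ≤ k by omega)
    have : (k : ℝ) ≤ n := by exact_mod_cast hk
    linarith
  rw [Nat.choose_symm_of_eq_add hab.symm]
  suffices h : ((k.choose b * (n - k).choose b * (100 * (k + 1)) : ℕ) : ℝ) ≤ 2 ^ (a * b) by
    exact_mod_cast h
  calc ((k.choose b * (n - k).choose b * (100 * (k + 1)) : ℕ) : ℝ)
      ≤ (exp 1 * s) ^ b * (exp 1 * s) ^ b * (200 * b * s) := by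
        push_cast
        gcongr
        exacts [hchoose hk, hchoose (Nat.sub_le n k)]
    _ = 200 * b * s * (exp 1 * s) ^ (2 * b) := by ring
    _ ≤ 2 ^ (a * b) := two_hundred_mul_exp_one_mul_pow_le_two_pow hb hs hthreshold

open Finset

theorem sum_sum_card_eq_sum_sum_choose_smul {M : Type*} [AddCommMonoid M] {k m : ℕ}
    (f : ℕ → ℕ → M) :
    ∑ L : Finset (Fin k), ∑ R : Finset (Fin m), f #L #R
      = ∑ a ∈ range (k + 1), ∑ b ∈ range (m + 1), (k.choose a * m.choose b) • f a b := by
  rw [← powerset_univ, sum_powerset_apply_card (fun a => ∑ R : Finset (Fin m), f a #R)]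
  refine sum_congr (by rw [card_fin]) fun a _ => ?_
  rw [← powerset_univ, sum_powerset_apply_card (f a), smul_sum, card_fin, card_fin]
  simp only [mul_smul]

theorem natCast_mul_half_pow_le_inv {x y e : ℕ} (h : x * y ≤ 2 ^ e) :
    (x : ENNReal) * (1 / 2) ^ e ≤ (y : ENNReal)⁻¹ := by
  rw [ENNReal.le_inv_iff_mul_le, one_div, ← ENNReal.inv_pow, mul_right_comm, ← div_eq_mul_inv]
  exact ENNReal.div_le_of_le_mul (by rw [one_mul]; exact_mod_cast h)

theorem MeasureTheory.one_sub_le_measure_of_measure_compl_le {Ω : Type*} [MeasurableSpace Ω]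
    {μ : Measure Ω} [IsProbabilityMeasure μ] {s : Set Ω} {ε : ENNReal} (h : μ sᶜ ≤ ε) :
    1 - ε ≤ μ s := by
  rw [tsub_le_iff_left, ← measure_univ (μ := μ)]
  exact (measure_univ_le_add_compl s).trans (by rw [add_comm]; gcongr)

namespace bipartiteER

variable {k m : ℕ} {p : ENNReal} (hp : p ≤ 1)

instance isProbabilityMeasure : IsProbabilityMeasure (bipartiteER k m p hp) := by
  unfold bipartiteER
  infer_instance

set_option linter.deprecated false in
theorem measure_isBiclique (L : Finset (Fin k)) (R : Finset (Fin m)) :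
    bipartiteER k m p hp {H | IsBiclique H L R} = p ^ (#L * #R) := by
  have hset : {H : Fin k × Fin m → Bool | IsBiclique H L R}
      = Set.univ.pi fun e => if e ∈ L ×ˢ R then {true} else Set.univ := by
    ext H
    simp only [IsBiclique, Set.mem_ofPred_eq, Set.mem_univ_pi, Prod.forall, mem_product]
    refine ⟨fun h u v => ?_, fun h u hu v hv => by simpa [hu, hv] using h u v⟩
    split_ifs with huv
    exacts [h u huv.1 v huv.2, Set.mem_univ _]
  have hedge (h) : (PMF.bernoulli p.toNNReal h).toMeasure {true} = p := by
    rw [PMF.toMeasure_apply_singleton _ _ (measurableSet_singleton true), PMF.bernoulli_apply,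
      cond_true, ENNReal.coe_toNNReal (ne_top_of_le_ne_top ENNReal.one_ne_top hp)]
  rw [hset, bipartiteER, Measure.pi_pi]
  simp only [apply_ite, measure_univ]
  rw [prod_ite_mem_eq, prod_const, card_product]
  exact congrArg (· ^ (#L * #R)) (hedge _)

theorem measure_exists_isBiclique_le (Q : ℕ → ℕ → Prop) [DecidableRel Q] :
    bipartiteER k m p hp {H | ∃ L R, IsBiclique H L R ∧ Q #L #R}
      ≤ ∑ a ∈ range (k + 1), ∑ b ∈ range (m + 1),
          if Q a b then (k.choose a * m.choose b : ℕ) * p ^ (a * b) else 0 := by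
  have hset : {H | ∃ L R, IsBiclique H L R ∧ Q #L #R}
      = ⋃ LR ∈ (univ : Finset (Finset (Fin k) × Finset (Fin m))).filter (fun LR => Q #LR.1 #LR.2),
          {H | IsBiclique H LR.1 LR.2} := by
    ext H
    simp only [Set.mem_ofPred_eq, Set.mem_iUnion, mem_filter, mem_univ, true_and, exists_prop,
      Prod.exists]
    exact exists₂_congr fun L R => and_comm
  calc _ = _ := congrArg _ hset
    _ ≤ _ := measure_biUnion_finset_le _ _
    _ = ∑ L : Finset (Fin k), ∑ R : Finset (Fin m),
          if Q #L #R then p ^ (#L * #R) else 0 := by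
        rw [sum_filter, ← univ_product_univ, sum_product]
        simp only [measure_isBiclique]
    _ = _ := by
        rw [sum_sum_card_eq_sum_sum_choose_smul (fun a b => if Q a b then p ^ (a * b) else 0)]
        simp only [nsmul_eq_mul, mul_ite, mul_zero]

theorem measure_exists_isBiclique_le_inv {N : ℕ} (Q : ℕ → ℕ → Prop) [DecidableRel Q]
    (hQ : ∀ a b, Q a b → a + b = k ∧ k.choose a * m.choose b * (N * (k + 1)) ≤ 2 ^ (a * b)) :
    bipartiteER k m (1 / 2) (by norm_num) {H | ∃ L R, IsBiclique H L R ∧ Q #L #R}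
      ≤ (N : ENNReal)⁻¹ := by
  set ε : ENNReal := ((N * (k + 1) : ℕ) : ENNReal)⁻¹
  have hterm (a b : ℕ) : (if Q a b then
      ((k.choose a * m.choose b : ℕ) : ENNReal) * (1 / 2) ^ (a * b) else 0)
        ≤ if b = k - a then ε else 0 := by
    split_ifs with hab hb
    · exact natCast_mul_half_pow_le_inv (hQ a b hab).2
    · exact absurd (by have := (hQ a b hab).1; omega) hb
    all_goals exact zero_le
  calc _ ≤ _ := measure_exists_isBiclique_le _ Q
    _ ≤ ∑ a ∈ range (k + 1), ∑ b ∈ range (m + 1), if b = k - a then ε else 0 := by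
        gcongr with a _ b _
        exact hterm a b
    _ ≤ ∑ a ∈ range (k + 1), ε := by
        gcongr with a _
        rw [sum_ite_eq']
        split_ifs <;> simp
    _ = (N : ENNReal)⁻¹ := by
        rw [sum_const, card_range, nsmul_eq_mul]
        simp only [ε]
        push_cast
        rw [ENNReal.mul_inv (by simp) (by simp), mul_left_comm,
          ENNReal.mul_inv_cancel (by simp) (by simp), mul_one]

end bipartiteER

/-- There is a constant `c > 0` such that for all `n ≥ 2`, `k ≤ n` and
`1 ≤ r ≤ c·k²/(n·log n)`, with probability at least `0.99` over `H ∼ B(k, n−k, 1/2)`,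
every biclique `(L, R)` of `H` with `|L| + |R| = k` satisfies
`|L|^{4r}·|R| ≤ (1000r)^{10r}·n·(n/k)⁴`. -/
theorem stmt_12 : ∃ c : ℝ, 0 < c ∧ ∀ n k r : ℕ, 2 ≤ n → k ≤ n → 1 ≤ r →
    (r : ℝ) ≤ c * (k : ℝ) ^ 2 / ((n : ℝ) * Real.log n) →
    ENNReal.ofReal 0.99 ≤
      bipartiteER k (n - k) (1/2) (by norm_num)
        {H | ∀ (L : Finset (Fin k)) (R : Finset (Fin (n - k))),
          IsBiclique H L R → L.card + R.card = k →
          (L.card : ℝ) ^ (4 * r) * R.card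
            ≤ (1000 * (r : ℝ)) ^ (10 * r) * n * ((n : ℝ) / k) ^ 4} := by
  refine ⟨1, one_pos, fun n k r _ hk hr _ => ?_⟩
  set bad : ℕ → ℕ → Prop := fun a b =>
    a + b = k ∧ (1000 * r : ℝ) ^ (10 * r) * n * ((n : ℝ) / k) ^ 4 < (a : ℝ) ^ (4 * r) * b
  have hbad := bipartiteER.measure_exists_isBiclique_le_inv (m := n - k) (N := 100) bad
    fun a b h => ⟨h.1, choose_mul_choose_mul_le_two_pow hk hr h.1 h.2⟩
  have h99 : ENNReal.ofReal 0.99 = 1 - 100⁻¹ := by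
    rw [show (0.99 : ℝ) = 1 - 100⁻¹ by norm_num, ENNReal.ofReal_sub _ (by norm_num),
      ENNReal.ofReal_one, ENNReal.ofReal_inv_of_pos (by norm_num), ENNReal.ofReal_ofNat]
  refine h99.le.trans (one_sub_le_measure_of_measure_compl_le (le_trans ?_ hbad))
  refine measure_mono fun H hH => ?_
  simpa [bad] using hH
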